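/- Fix an integer n ≥ 1, a real constant Λ ≤ 0, a real K > 0, and η ∈ (−∞, ∞]. Let (a, b, c) be an unstable trajectory of (0, K, K) on (−∞, η), and suppose a(u) < b(u) for all u < η. Then for every u < η the following two inequalities hold: c(u)² ≤ a(u)² + b(u)² − (2Λ/n)a(u)²b(u)², and b(u)² ≤ a(u)² + c(u)². -/

import Mathlib

open Filter Set

/-- A solution (a, b, c) of the reduced Kähler–Einstein system on the interval
(−∞, η) (η ∈ (−∞, ∞] encoded as an `EReal`), positive there, and converging to the
critical point (0, K, K) as u → −∞: an unstable trajectory of (0, K, K). -/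
def IsUnstableTrajectory (n : ℕ) (Λ K : ℝ) (η : EReal) (a b c : ℝ → ℝ) : Prop :=
  (∀ u : ℝ, (u : EReal) < η →
    HasDerivAt a ((1/2) * a u * (b u ^ 2 + c u ^ 2 - a u ^ 2)) u ∧
    HasDerivAt b ((1/2) * b u * (c u ^ 2 + a u ^ 2 - b u ^ 2)) u ∧
    HasDerivAt c ((1/2) * (n : ℝ) * c u *
      (a u ^ 2 + b u ^ 2 - c u ^ 2 - (2 * Λ / (n : ℝ)) * a u ^ 2 * b u ^ 2)) u ∧
    0 < a u ∧ 0 < b u ∧ 0 < c u) ∧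
  Tendsto a atBot (nhds 0) ∧ Tendsto b atBot (nhds K) ∧ Tendsto c atBot (nhds K)

/-- The filter of approach to η ∈ (−∞, ∞] from the left within ℝ:
it is 𝓝[<] η when η is real, and `atTop` when η = ∞. -/
noncomputable def nhdsLeft (η : EReal) : Filter ℝ :=
  Filter.comap (fun u : ℝ => (u : EReal)) (nhdsWithin η (Set.Iio η))

/- STATEMENT 8: (Lemma) on an unstable trajectory of (0, K, K) with K > 0 and Λ ≤ 0,
the inequalities c² ≤ a² + b² − (2Λ/n)a²b² and b² ≤ a² + c² hold on (−∞, η). -/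

lemma ray_nonneg {φ φd : ℝ → ℝ} {u₀ : ℝ}
    (hd : ∀ u ≤ u₀, HasDerivAt φ (φd u) u)
    (hpos : ∀ u ≤ u₀, φ u < 0 → 0 < φd u)
    (htend : Tendsto φ atBot (nhds 0)) : 0 ≤ φ u₀ := by
  by_contra hneg
  push_neg at hneg
  have hstep : ∀ u ≤ u₀, φ u < 0 := by
    by_contra hcon
    push_neg at hcon
    obtain ⟨u₁, hu₁, hφ₁⟩ := hcon
    let T : Set ℝ := {u | u ≤ u₀ ∧ 0 ≤ φ u}
    have hTne : T.Nonempty := ⟨u₁, hu₁, hφ₁⟩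
    have hTbdd : BddAbove T := ⟨u₀, fun x hx => hx.1⟩
    obtain ⟨w, hwdef⟩ : ∃ w : ℝ, w = sSup T := ⟨_, rfl⟩
    have hwle : w ≤ u₀ := hwdef ▸ csSup_le hTne fun x hx => hx.1
    have hwcl : w ∈ closure T := hwdef ▸ csSup_mem_closure hTne hTbdd
    have hwnb : (nhdsWithin w T).NeBot := mem_closure_iff_nhdsWithin_neBot.mp hwcl
    have hφw : 0 ≤ φ w := by
      have hc : Tendsto φ (nhdsWithin w T) (nhds (φ w)) :=
        ((hd w hwle).continuousAt).continuousWithinAt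
      have hev : ∀ᶠ x in nhdsWithin w T, 0 ≤ φ x := by
        filter_upwards [eventually_mem_nhdsWithin] with x hx
        exact hx.2
      exact ge_of_tendsto hc hev
    have hwlt : w < u₀ := lt_of_le_of_ne hwle (by rintro rfl; exact absurd hφw (not_le.mpr hneg))
    have hIoc : ∀ u ∈ Ioc w u₀, φ u < 0 := by
      intro u hu
      by_contra hge
      push_neg at hge
      exact absurd (hwdef ▸ le_csSup hTbdd ⟨hu.2, hge⟩) (not_le.mpr hu.1)
    have hmono : StrictMonoOn φ (Icc w u₀) := by
      apply strictMonoOn_of_deriv_pos (convex_Icc w u₀)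
      · exact fun x hx => ((hd x hx.2).continuousAt).continuousWithinAt
      · intro x hx
        rw [interior_Icc] at hx
        rw [(hd x hx.2.le).deriv]
        exact hpos x hx.2.le (hIoc x ⟨hx.1, hx.2.le⟩)
    have : φ w < φ u₀ := hmono ⟨le_refl w, hwle⟩ ⟨hwle, le_refl u₀⟩ hwlt
    linarith
  have hmono : StrictMonoOn φ (Iic u₀) := by
    apply strictMonoOn_of_deriv_pos (convex_Iic u₀)
    · exact fun x hx => ((hd x hx).continuousAt).continuousWithinAt
    · intro x hx
      rw [interior_Iic] at hx
      rw [(hd x hx.le).deriv]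
      exact hpos x hx.le (hstep x hx.le)
  have hev : ∀ᶠ u in atBot, φ u ≤ φ u₀ := by
    filter_upwards [eventually_le_atBot u₀] with u hu
    rcases eq_or_lt_of_le hu with rfl | hlt
    · exact le_refl _
    · exact (hmono (le_of_lt hlt) (le_refl u₀) hlt).le
  exact absurd (le_of_tendsto htend hev) (not_le.mpr hneg)

set_option maxHeartbeats 1000000 in
theorem lemma_inequalities
    (n : ℕ) (hn : 1 ≤ n) (Λ : ℝ) (hΛ : Λ ≤ 0) (K : ℝ) (hK : 0 < K)
    (η : EReal) (hη : η ≠ ⊥)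
    (a b c : ℝ → ℝ) (h : IsUnstableTrajectory n Λ K η a b c)
    (hab : ∀ u : ℝ, (u : EReal) < η → a u < b u) :
    ∀ u : ℝ, (u : EReal) < η →
      c u ^ 2 ≤ a u ^ 2 + b u ^ 2 - (2 * Λ / (n : ℝ)) * a u ^ 2 * b u ^ 2 ∧
      b u ^ 2 ≤ a u ^ 2 + c u ^ 2 := by
  obtain ⟨hode, hta, htb, htc⟩ := h
  have hnpos : (0:ℝ) < (n:ℝ) := by exact_mod_cast Nat.lt_of_lt_of_le Nat.zero_lt_one hn
  have hnge : (1:ℝ) ≤ (n:ℝ) := by exact_mod_cast hn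
  have hL : 2 * Λ / (n:ℝ) ≤ 0 := by
    apply div_nonpos_of_nonpos_of_nonneg (by linarith) hnpos.le
  -- derivative of a², b², c²
  have hAd : ∀ u : ℝ, (u : EReal) < η →
      HasDerivAt (fun u => a u ^ 2) (a u ^ 2 * (b u ^ 2 + c u ^ 2 - a u ^ 2)) u := by
    intro u hu
    have := (hode u hu).1.fun_pow 2
    refine this.congr_deriv ?_
    push_cast
    ring
  have hBd : ∀ u : ℝ, (u : EReal) < η →
      HasDerivAt (fun u => b u ^ 2) (b u ^ 2 * (c u ^ 2 + a u ^ 2 - b u ^ 2)) u := by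
    intro u hu
    have := (hode u hu).2.1.fun_pow 2
    refine this.congr_deriv ?_
    push_cast
    ring
  have hCd : ∀ u : ℝ, (u : EReal) < η →
      HasDerivAt (fun u => c u ^ 2)
        ((n:ℝ) * c u ^ 2 * (a u ^ 2 + b u ^ 2 - c u ^ 2 - 2 * Λ / (n:ℝ) * a u ^ 2 * b u ^ 2)) u := by
    intro u hu
    have := (hode u hu).2.2.1.fun_pow 2
    refine this.congr_deriv ?_
    push_cast
    ring
  -- First invariant: F := a² + b² - (2Λ/n) a² b² - c² is nonnegative
  have hF : ∀ u₀ : ℝ, (u₀ : EReal) < η →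
      0 ≤ a u₀ ^ 2 + b u₀ ^ 2 - 2 * Λ / (n:ℝ) * a u₀ ^ 2 * b u₀ ^ 2 - c u₀ ^ 2 := by
    intro u₀ hu₀
    have hle : ∀ u : ℝ, u ≤ u₀ → (u : EReal) < η :=
      fun u hu => lt_of_le_of_lt (EReal.coe_le_coe_iff.mpr hu) hu₀
    refine ray_nonneg
      (φ := fun u => a u ^ 2 + b u ^ 2 - 2 * Λ / (n:ℝ) * a u ^ 2 * b u ^ 2 - c u ^ 2)
      (φd := fun u =>
        a u ^ 2 * (b u ^ 2 + c u ^ 2 - a u ^ 2)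
        + b u ^ 2 * (c u ^ 2 + a u ^ 2 - b u ^ 2)
        - (2 * Λ / (n:ℝ) * (a u ^ 2 * (b u ^ 2 + c u ^ 2 - a u ^ 2)) * b u ^ 2
           + 2 * Λ / (n:ℝ) * a u ^ 2 * (b u ^ 2 * (c u ^ 2 + a u ^ 2 - b u ^ 2)))
        - (n:ℝ) * c u ^ 2 * (a u ^ 2 + b u ^ 2 - c u ^ 2 - 2 * Λ / (n:ℝ) * a u ^ 2 * b u ^ 2))
      ?_ ?_ ?_
    · intro u hu
      have hu' := hle u hu
      exact (((hAd u hu').add (hBd u hu')).sub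
        (((hAd u hu').const_mul (2 * Λ / (n:ℝ))).mul (hBd u hu'))).sub (hCd u hu')
    · intro u hu hFu
      obtain ⟨-, -, -, pa, pb, pc⟩ := hode u (hle u hu)
      have hA : 0 < a u ^ 2 := pow_pos pa 2
      have hB : 0 < b u ^ 2 := pow_pos pb 2
      have hC : 0 < c u ^ 2 := pow_pos pc 2
      set A := a u ^ 2
      set B := b u ^ 2
      set C := c u ^ 2
      set L := 2 * Λ / (n:ℝ) with hLdef
      have key : A * (B + C - A) + B * (C + A - B)
          - (L * (A * (B + C - A)) * B + L * A * (B * (C + A - B)))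
          - (n:ℝ) * C * (A + B - C - L * A * B)
          = A * B * ((1 - L * B) * (2 - L * A) + (1 - L * A) * (2 - L * B))
            - (A + B - L * A * B - C) * (A * (1 - L * B) + B * (1 - L * A) + (n:ℝ) * C) := by
        ring
      have hQ : 0 < (1 - L * B) * (2 - L * A) + (1 - L * A) * (2 - L * B) := by
        nlinarith [mul_nonpos_of_nonpos_of_nonneg hL hB.le, mul_nonpos_of_nonpos_of_nonneg hL hA.le]
      have hP : 0 < A * (1 - L * B) + B * (1 - L * A) + (n:ℝ) * C := by
        nlinarith [mul_nonpos_of_nonpos_of_nonneg hL hB.le, mul_nonpos_of_nonpos_of_nonneg hL hA.le,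
          mul_pos hnpos hC]
      have h1 : 0 < A * B * ((1 - L * B) * (2 - L * A) + (1 - L * A) * (2 - L * B)) :=
        mul_pos (mul_pos hA hB) hQ
      have hFu' : A + B - L * A * B - C < 0 := hFu
      have h2 : 0 ≤ (C - (A + B - L * A * B)) * (A * (1 - L * B) + B * (1 - L * A) + (n:ℝ) * C) :=
        mul_nonneg (by linarith) hP.le
      show 0 < A * (B + C - A) + B * (C + A - B)
        - (L * (A * (B + C - A)) * B + L * A * (B * (C + A - B)))
        - (n:ℝ) * C * (A + B - C - L * A * B)
      linarith [key, h1, h2]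
    · have t1 : Tendsto (fun u => a u ^ 2) atBot (nhds (0 ^ 2 : ℝ)) := hta.pow 2
      have t2 : Tendsto (fun u => b u ^ 2) atBot (nhds (K ^ 2)) := htb.pow 2
      have t3 : Tendsto (fun u => c u ^ 2) atBot (nhds (K ^ 2)) := htc.pow 2
      have := ((t1.add t2).sub (((t1.const_mul (2 * Λ / (n:ℝ))).mul t2))).sub t3
      convert this using 2
      ring
  -- Second invariant: G := a² + c² - b² is nonnegative
  have hG : ∀ u₀ : ℝ, (u₀ : EReal) < η →
      0 ≤ a u₀ ^ 2 + c u₀ ^ 2 - b u₀ ^ 2 := by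
    intro u₀ hu₀
    have hle : ∀ u : ℝ, u ≤ u₀ → (u : EReal) < η :=
      fun u hu => lt_of_le_of_lt (EReal.coe_le_coe_iff.mpr hu) hu₀
    refine ray_nonneg
      (φ := fun u => a u ^ 2 + c u ^ 2 - b u ^ 2)
      (φd := fun u =>
        a u ^ 2 * (b u ^ 2 + c u ^ 2 - a u ^ 2)
        + (n:ℝ) * c u ^ 2 * (a u ^ 2 + b u ^ 2 - c u ^ 2 - 2 * Λ / (n:ℝ) * a u ^ 2 * b u ^ 2)
        - b u ^ 2 * (c u ^ 2 + a u ^ 2 - b u ^ 2))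
      ?_ ?_ ?_
    · intro u hu
      have hu' := hle u hu
      exact ((hAd u hu').add (hCd u hu')).sub (hBd u hu')
    · intro u hu hGu
      have hu' := hle u hu
      obtain ⟨-, -, -, pa, pb, pc⟩ := hode u hu'
      have hFu := hF u hu'
      have habu := hab u hu'
      have hA : 0 < a u ^ 2 := pow_pos pa 2
      have hC : 0 < c u ^ 2 := pow_pos pc 2
      have hBA : a u ^ 2 < b u ^ 2 := by nlinarith
      set A := a u ^ 2
      set B := b u ^ 2
      set C := c u ^ 2
      set L := 2 * Λ / (n:ℝ) with hLdef
      have key : A * (B + C - A) + (n:ℝ) * C * (A + B - C - L * A * B)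
          - B * (C + A - B)
          = (B - A) * (2 * A - (A + C - B))
            + (n:ℝ) * C * (A + B - L * A * B - C) := by
        ring
      have hGu' : A + C - B < 0 := hGu
      have hFu' : 0 ≤ A + B - L * A * B - C := by
        have : 0 ≤ A + B - L * A * B - C := hFu
        linarith
      have h1 : 0 < (B - A) * (2 * A - (A + C - B)) :=
        mul_pos (by linarith) (by linarith)
      have h2 : 0 ≤ (n:ℝ) * C * (A + B - L * A * B - C) :=
        mul_nonneg (mul_nonneg hnpos.le hC.le) (by linarith)
      show 0 < A * (B + C - A)
        + (n:ℝ) * C * (A + B - C - L * A * B)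
        - B * (C + A - B)
      linarith [key, h1, h2]
    · have t1 : Tendsto (fun u => a u ^ 2) atBot (nhds (0 ^ 2 : ℝ)) := hta.pow 2
      have t2 : Tendsto (fun u => b u ^ 2) atBot (nhds (K ^ 2)) := htb.pow 2
      have t3 : Tendsto (fun u => c u ^ 2) atBot (nhds (K ^ 2)) := htc.pow 2
      have := (t1.add t3).sub t2
      convert this using 2
      ring
  intro u hu
  constructor
  · have := hF u hu
    linarith
  · have := hG u hu
    linarith
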